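/- Let A ∈ ℝ^{m×n}, b ∈ ℝᵐ, λ > 0, and define the Lasso objective f(x) = ½‖Ax − b‖² + λ‖x‖₁ for x ∈ ℝⁿ. Then the subdifferential mapping T_f = ∂f is a polyhedral multifunction (its graph is the union of finitely many polyhedral convex sets), the set T_f⁻¹(0) of minimizers of f is nonempty, and T_f satisfies the error bound condition for the origin: there exist κ ≥ 0 and ε > 0 such that dist(0, ∂f(x)) ≤ ε implies dist(x, T_f⁻¹(0)) ≤ κ · dist(0, ∂f(x)). -/

import Mathlib

open Set

noncomputable section

/-- A set is polyhedral if it is the intersection of finitely many closed half-spaces. -/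
def IsPolyhedral {E : Type*} [NormedAddCommGroup E] [NormedSpace ℝ E] (C : Set E) : Prop :=
  ∃ s : Finset ((E →ₗ[ℝ] ℝ) × ℝ), C = {x | ∀ q ∈ s, q.1 x ≤ q.2}

/-- The subdifferential of a real-valued convex function. -/
def RSubdiff {E : Type*} [NormedAddCommGroup E] [InnerProductSpace ℝ E]
    (f : E → ℝ) (x : E) : Set E :=
  {v | ∀ u : E, f x + (inner ℝ v (u - x) : ℝ) ≤ f u}

/-- The Lasso objective `f(x) = ½‖Ax − b‖² + λ‖x‖₁`. -/
def lassoObj (m n : ℕ) (A : Matrix (Fin m) (Fin n) ℝ) (b : Fin m → ℝ) (lam : ℝ)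
    (x : EuclideanSpace ℝ (Fin n)) : ℝ :=
  (1 / 2) * (∑ i, ((∑ j, A i j * x j) - b i) ^ 2) + lam * ∑ j, |x j|

/-!
The subdifferential of `f` splits coordinatewise: `v ∈ ∂f(x)` iff for every `j` the pair
`(x_j, (v - Aᵀ(Ax - b))_j)` lies in the graph of `∂(λ|·|)`, a union of three polyhedra in `ℝ²`.
Since these pairs depend affinely on `(x, v)`, the graph of `∂f` is a union of `3ⁿ` polyhedra.
Minimizers exist because `f` is continuous and coercive.

The error bound is Robinson's upper Lipschitz property of polyhedral multifunctions. On a piece `C`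
of the graph, a point `(x, v)` violates the inequalities cutting out the slice `{y | (y, 0) ∈ C}`
by `O(‖v‖)`, so Hoffman's lemma puts `x` within `O(‖v‖)` of the slice, which consists of zeros of
`∂f`; if the slice is empty, a Farkas certificate keeps `‖v‖` bounded away from `0` on `C`.
Hoffman's lemma is proved by projecting onto the polyhedron: the displacement lies in the cone of
the active normals, hence (Carathéodory) in a cone over linearly independent normals, on which the
coefficients are bounded by the norm of the combination.
-/

open Filter Topology RealInnerProductSpace

section FiniteCone

variable {ι E : Type*} [AddCommGroup E] [Module ℝ E]

def finiteCone (s : Finset ι) (a : ι → E) : Set E :=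
  {z | ∃ l : ι → ℝ, (∀ q ∈ s, 0 ≤ l q) ∧ ∑ q ∈ s, l q • a q = z}

variable {s t : Finset ι} {a : ι → E}

lemma zero_mem_finiteCone : (0 : E) ∈ finiteCone s a :=
  ⟨0, fun _ _ => le_rfl, by simp⟩

lemma smul_mem_finiteCone [DecidableEq ι] {q : ι} (hq : q ∈ s) {r : ℝ} (hr : 0 ≤ r) :
    r • a q ∈ finiteCone s a :=
  ⟨Pi.single q r, fun p _ => by by_cases h : p = q <;> simp [h, hr], by
    simp [Pi.single_apply, ite_smul, hq]⟩

lemma convex_finiteCone : Convex ℝ (finiteCone s a) := by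
  rintro _ ⟨l, hl, rfl⟩ _ ⟨l', hl', rfl⟩ μ ν hμ hν -
  refine ⟨μ • l + ν • l', fun q hq => ?_, ?_⟩
  · simp only [Pi.add_apply, Pi.smul_apply, smul_eq_mul]
    exact add_nonneg (mul_nonneg hμ (hl q hq)) (mul_nonneg hν (hl' q hq))
  · simp only [Pi.add_apply, Pi.smul_apply, smul_eq_mul, add_smul, mul_smul,
      Finset.sum_add_distrib, Finset.smul_sum]

lemma finiteCone_mono (h : t ⊆ s) : finiteCone t a ⊆ finiteCone s a := by
  classical
  rintro _ ⟨l, hl, rfl⟩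
  refine ⟨fun q => if q ∈ t then l q else 0, fun q _ => ?_, ?_⟩
  · dsimp only
    split_ifs with hq
    exacts [hl q hq, le_rfl]
  · rw [← Finset.sum_subset h (fun q _ hq => by simp [hq])]
    exact Finset.sum_congr rfl fun q hq => by simp [hq]

lemma exists_mem_finiteCone_erase [DecidableEq ι] {z : E} (hz : z ∈ finiteCone s a) {g : ι → ℝ}
    (hg : ∑ q ∈ s, g q • a q = 0) (hpos : ∃ q ∈ s, 0 < g q) :
    ∃ q ∈ s, z ∈ finiteCone (s.erase q) a := by
  obtain ⟨l, hl, rfl⟩ := hz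
  obtain ⟨q, hq, hq_min⟩ := (s.filter (0 < g ·)).exists_min_image (fun p => l p / g p)
    (by simpa [Finset.filter_nonempty_iff] using hpos)
  rw [Finset.mem_filter] at hq
  set r := l q / g q
  refine ⟨q, hq.1, l - r • g, fun p hp => ?_, ?_⟩
  · have hps := Finset.mem_of_mem_erase hp
    simp only [Pi.sub_apply, Pi.smul_apply, smul_eq_mul, sub_nonneg]
    rcases lt_or_ge 0 (g p) with hgp | hgp
    · exact (le_div_iff₀ hgp).1 (hq_min p (Finset.mem_filter.2 ⟨hps, hgp⟩))
    · exact (mul_nonpos_of_nonneg_of_nonpos (div_nonneg (hl q hq.1) hq.2.le) hgp).trans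
        (hl p hps)
  · rw [Finset.sum_erase _ (by simp [r, div_mul_cancel₀ _ hq.2.ne'])]
    simp [sub_smul, mul_smul, Finset.sum_sub_distrib, ← Finset.smul_sum, hg]

lemma exists_linearIndepOn_of_mem_finiteCone {z : E} (hz : z ∈ finiteCone s a) :
    ∃ t ⊆ s, LinearIndepOn ℝ a (t : Set ι) ∧ z ∈ finiteCone t a := by
  classical
  induction s using Finset.strongInduction with
  | H s ih =>
    by_cases hind : LinearIndepOn ℝ a (s : Set ι)
    · exact ⟨s, subset_rfl, hind, hz⟩
    obtain ⟨g, hg, q, hq, hgq⟩ := not_linearIndepOn_finset_iff.1 hind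
    have hrel : ∃ g : ι → ℝ, ∑ p ∈ s, g p • a p = 0 ∧ ∃ q ∈ s, 0 < g q := by
      rcases hgq.lt_or_gt with h | h
      · exact ⟨-g, by simp [neg_smul, hg], q, hq, by simpa using h⟩
      · exact ⟨g, hg, q, hq, h⟩
    obtain ⟨g, hg, hpos⟩ := hrel
    obtain ⟨p, hp, hzp⟩ := exists_mem_finiteCone_erase hz hg hpos
    obtain ⟨t, hts, ht, hzt⟩ := ih _ (Finset.erase_ssubset hp) hzp
    exact ⟨t, hts.trans (s.erase_subset p), ht, hzt⟩

lemma finiteCone_eq_image (t : Finset ι) (a : ι → E) :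
    finiteCone t a = Fintype.linearCombination ℝ (fun q : t => a q) '' Ici 0 := by
  ext z
  constructor
  · rintro ⟨l, hl, rfl⟩
    refine ⟨fun q => l q, fun q => hl q q.2, ?_⟩
    simpa [Fintype.linearCombination_apply] using Finset.sum_attach t (fun q => l q • a q)
  · rintro ⟨l, hl, rfl⟩
    classical
    refine ⟨fun i => if h : i ∈ t then l ⟨i, h⟩ else 0, fun i hi => by simpa [hi] using hl ⟨i, hi⟩,
      ?_⟩
    rw [Fintype.linearCombination_apply, ← Finset.sum_coe_sort t]
    exact Finset.sum_congr rfl fun q _ => by simp [q.2]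

end FiniteCone

section FiniteConeTopology

variable {ι E : Type*} [NormedAddCommGroup E] [NormedSpace ℝ E] {s : Finset ι} {a : ι → E}

lemma isClosed_finiteCone : IsClosed (finiteCone s a) := by
  classical
  have hunion : finiteCone s a =
      ⋃ t ∈ s.powerset.filter (fun t : Finset ι => LinearIndepOn ℝ a (t : Set ι)),
        finiteCone t a := by
    ext z
    simp only [mem_iUnion, Finset.mem_filter, Finset.mem_powerset, exists_prop]
    constructor
    · intro hz
      obtain ⟨t, hts, ht, hzt⟩ := exists_linearIndepOn_of_mem_finiteCone hz
      exact ⟨t, ⟨hts, ht⟩, hzt⟩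
    · rintro ⟨t, ⟨hts, -⟩, hz⟩
      exact finiteCone_mono hts hz
  rw [hunion]
  refine Set.Finite.isClosed_biUnion (Finset.finite_toSet _) fun t ht => ?_
  have hinj := (Finset.mem_filter.1 ht).2.fintypeLinearCombination_injective
  rw [finiteCone_eq_image]
  exact (LinearMap.isClosedEmbedding_of_injective (LinearMap.ker_eq_bot.2 hinj)).isClosedMap _
    isClosed_Ici

lemma exists_dual_pos_of_notMem_finiteCone {d : E} (hd : d ∉ finiteCone s a) :
    ∃ f : StrongDual ℝ E, (∀ q ∈ s, f (a q) ≤ 0) ∧ 0 < f d := by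
  classical
  obtain ⟨f, u, hfu, hud⟩ :=
    geometric_hahn_banach_closed_point convex_finiteCone isClosed_finiteCone hd
  have hu : 0 < u := by simpa using hfu 0 zero_mem_finiteCone
  refine ⟨f, fun q hq => ?_, hu.trans hud⟩
  by_contra! hq'
  have := hfu _ (smul_mem_finiteCone hq (div_nonneg hu.le hq'.le))
  rw [map_smul, smul_eq_mul, div_mul_cancel₀ _ hq'.ne'] at this
  exact lt_irrefl _ this

end FiniteConeTopology

section Polyhedron

variable {ι E : Type*} [NormedAddCommGroup E] [InnerProductSpace ℝ E]
  {s : Finset ι} {a : ι → E} {c : ι → ℝ}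

def polyhedron (s : Finset ι) (a : ι → E) (c : ι → ℝ) : Set E :=
  {z | ∀ q ∈ s, ⟪a q, z⟫ ≤ c q}

lemma isClosed_polyhedron : IsClosed (polyhedron s a c) := by
  simp only [polyhedron, ofPred_forall]
  exact isClosed_biInter fun q _ => isClosed_le (continuous_const.inner continuous_id)
    continuous_const

lemma convex_polyhedron : Convex ℝ (polyhedron s a c) := by
  simp only [polyhedron, ofPred_forall]
  exact convex_iInter₂ fun q _ => convex_halfSpace_le (innerₗ E (a q)).isLinear (c q)

lemma eventually_add_smul_mem_polyhedron {p u : E} (hp : p ∈ polyhedron s a c)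
    (hu : ∀ q ∈ s, ⟪a q, p⟫ = c q → ⟪a q, u⟫ ≤ 0) :
    ∀ᶠ δ in 𝓝[>] (0 : ℝ), p + δ • u ∈ polyhedron s a c := by
  refine (Filter.eventually_all_finset s).2 fun q hq => ?_
  simp only [inner_add_right, real_inner_smul_right]
  rcases (hp q hq).eq_or_lt with hact | hlt
  · filter_upwards [self_mem_nhdsWithin] with δ hδ
    nlinarith [hu q hq hact, mem_Ioi.1 hδ]
  · have hcont : Continuous fun δ : ℝ => ⟪a q, p⟫ + δ * ⟪a q, u⟫ := by fun_prop
    have := hcont.tendsto 0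
    simp only [zero_mul, add_zero] at this
    exact nhdsWithin_le_nhds ((this.eventually (gt_mem_nhds hlt)).mono fun _ h => h.le)

lemma sub_mem_finiteCone_of_forall_inner_le [CompleteSpace E] {z p : E}
    (hp : p ∈ polyhedron s a c) (hproj : ∀ w ∈ polyhedron s a c, ⟪z - p, w - p⟫ ≤ 0) :
    z - p ∈ finiteCone (s.filter fun q => ⟪a q, p⟫ = c q) a := by
  by_contra hd
  obtain ⟨f, hf, hfd⟩ := exists_dual_pos_of_notMem_finiteCone hd
  set u := (InnerProductSpace.toDual ℝ E).symm f
  have hu : ∀ y, ⟪u, y⟫ = f y := fun y => InnerProductSpace.toDual_symm_apply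
  have hdir : ∀ q ∈ s, ⟪a q, p⟫ = c q → ⟪a q, u⟫ ≤ 0 := fun q hq hact => by
    rw [real_inner_comm, hu]
    exact hf q (Finset.mem_filter.2 ⟨hq, hact⟩)
  obtain ⟨δ, hmem, hδ⟩ :=
    ((eventually_add_smul_mem_polyhedron hp hdir).and self_mem_nhdsWithin).exists
  have := hproj _ hmem
  rw [add_sub_cancel_left, real_inner_smul_right, real_inner_comm, hu] at this
  nlinarith

lemma LinearIndepOn.eventually_abs_le_mul_norm_sum {t : Finset ι}
    (ht : LinearIndepOn ℝ a (t : Set ι)) :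
    ∀ᶠ C in atTop, ∀ l : ι → ℝ, ∀ q ∈ t, |l q| ≤ C * ‖∑ p ∈ t, l p • a p‖ := by
  obtain ⟨K, -, hK⟩ := (Fintype.linearCombination ℝ (fun q : t => a q)).exists_antilipschitzWith
    (LinearMap.ker_eq_bot.2 ht.fintypeLinearCombination_injective)
  filter_upwards [eventually_ge_atTop (K : ℝ)] with C hC l q hq
  have hbound := ZeroHomClass.bound_of_antilipschitz _ hK (fun p : t => l p)
  rw [Fintype.linearCombination_apply, Finset.sum_coe_sort t (fun p => l p • a p)] at hbound
  calc |l q| = ‖(fun p : t => l p) ⟨q, hq⟩‖ := by simp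
    _ ≤ ‖fun p : t => l p‖ := norm_le_pi_norm (fun p : t => l p) ⟨q, hq⟩
    _ ≤ K * ‖∑ p ∈ t, l p • a p‖ := hbound
    _ ≤ C * ‖∑ p ∈ t, l p • a p‖ := by gcongr

lemma exists_forall_linearIndepOn_abs_le_mul_norm_sum (s : Finset ι) (a : ι → E) :
    ∃ κ, 0 ≤ κ ∧ ∀ t ⊆ s, LinearIndepOn ℝ a (t : Set ι) →
      ∀ l : ι → ℝ, ∀ q ∈ t, |l q| ≤ κ * ‖∑ p ∈ t, l p • a p‖ := by
  have hev : ∀ t ∈ s.powerset, ∀ᶠ κ in atTop, LinearIndepOn ℝ a (t : Set ι) →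
      ∀ l : ι → ℝ, ∀ q ∈ t, |l q| ≤ κ * ‖∑ p ∈ t, l p • a p‖ := fun t _ => by
    by_cases ht : LinearIndepOn ℝ a (t : Set ι)
    · exact ht.eventually_abs_le_mul_norm_sum.mono fun _ h _ => h
    · exact Eventually.of_forall fun _ h => absurd h ht
  obtain ⟨κ, hκ, hκ0⟩ :=
    (((Filter.eventually_all_finset _).2 hev).and (eventually_ge_atTop 0)).exists
  exact ⟨κ, hκ0, fun t hts => hκ t (Finset.mem_powerset.2 hts)⟩

theorem exists_hoffman_bound [CompleteSpace E] (hne : (polyhedron s a c).Nonempty) :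
    ∃ κ, 0 ≤ κ ∧ ∀ z, ∃ p ∈ polyhedron s a c,
      ‖z - p‖ ≤ κ * ∑ q ∈ s, max (⟪a q, z⟫ - c q) 0 := by
  obtain ⟨κ, hκ0, hκ⟩ := exists_forall_linearIndepOn_abs_le_mul_norm_sum s a
  refine ⟨κ, hκ0, fun z => ?_⟩
  obtain ⟨p, hp, hmin⟩ := exists_norm_eq_iInf_of_complete_convex hne
    isClosed_polyhedron.isComplete convex_polyhedron z
  have hproj := (norm_eq_iInf_iff_real_inner_le_zero convex_polyhedron hp).1 hmin
  obtain ⟨t, hts, ht, l, hl, hsum⟩ :=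
    exists_linearIndepOn_of_mem_finiteCone (sub_mem_finiteCone_of_forall_inner_le hp hproj)
  have hts' : t ⊆ s := hts.trans (Finset.filter_subset _ _)
  refine ⟨p, hp, ?_⟩
  set V := ∑ q ∈ s, max (⟪a q, z⟫ - c q) 0
  have hV : 0 ≤ V := Finset.sum_nonneg fun _ _ => le_max_right _ _
  -- only active constraints carry weight, and for them `⟪a q, z - p⟫` is the violation at `z`
  have key : ‖z - p‖ ^ 2 ≤ κ * ‖z - p‖ * V := calc
    ‖z - p‖ ^ 2 = ⟪∑ q ∈ t, l q • a q, z - p⟫ := by rw [hsum, real_inner_self_eq_norm_sq]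
    _ = ∑ q ∈ t, l q * (⟪a q, z⟫ - c q) := by
      rw [sum_inner]
      refine Finset.sum_congr rfl fun q hq => ?_
      rw [real_inner_smul_left, inner_sub_right, (Finset.mem_filter.1 (hts hq)).2]
    _ ≤ ∑ q ∈ t, κ * ‖z - p‖ * max (⟪a q, z⟫ - c q) 0 := by
      refine Finset.sum_le_sum fun q hq => ?_
      have hlq : l q ≤ κ * ‖z - p‖ := by
        rw [← hsum]
        exact (le_abs_self _).trans (hκ t hts' ht l q hq)
      exact (mul_le_mul_of_nonneg_left (le_max_left _ _) (hl q hq)).trans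
        (mul_le_mul_of_nonneg_right hlq (le_max_right _ _))
    _ ≤ ∑ q ∈ s, κ * ‖z - p‖ * max (⟪a q, z⟫ - c q) 0 :=
      Finset.sum_le_sum_of_subset_of_nonneg hts' fun _ _ _ => by positivity
    _ = κ * ‖z - p‖ * V := (Finset.mul_sum _ _ _).symm
  rcases (norm_nonneg (z - p)).eq_or_lt with h0 | hpos
  · rw [← h0]
    positivity
  · nlinarith

theorem exists_farkas_certificate [CompleteSpace E] (h : polyhedron s a c = ∅) :
    ∃ l : ι → ℝ, (∀ q ∈ s, 0 ≤ l q) ∧ ∑ q ∈ s, l q • a q = 0 ∧ ∑ q ∈ s, l q * c q < 0 := by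
  -- the system is infeasible iff `(0, -1)` lies in the cone spanned by the `(a q, c q)` and `(0, 1)`
  let b : Option ι → E × ℝ := fun o => o.elim (0, 1) fun q => (a q, c q)
  have hmem : ((0 : E), (-1 : ℝ)) ∈ finiteCone s.insertNone b := by
    by_contra hd
    obtain ⟨f, hf, hfd⟩ := exists_dual_pos_of_notMem_finiteCone hd
    have hsplit : ∀ x t, f (x, t) = f (x, 0) + t * f (0, 1) := fun x t => by
      rw [← smul_eq_mul, ← map_smul, ← map_add]
      simp
    have hβ : f (0, 1) < 0 := by
      have := hsplit 0 (-1)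
      rw [Prod.mk_zero_zero, map_zero] at this
      linarith
    set y := (-f (0, 1))⁻¹ • (InnerProductSpace.toDual ℝ E).symm (f.comp (.inl ℝ E ℝ))
    have hy : y ∈ polyhedron s a c := fun q hq => by
      have hq' := hf (some q) (by simpa using hq)
      simp only [b, Option.elim_some] at hq'
      rw [hsplit] at hq'
      rw [real_inner_comm, real_inner_smul_left, InnerProductSpace.toDual_symm_apply,
        inv_mul_le_iff₀ (neg_pos.2 hβ)]
      change f (a q, 0) ≤ _
      linarith
    simp [h] at hy
  obtain ⟨L, hL, hsum⟩ := hmem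
  rw [Finset.sum_insertNone] at hsum
  refine ⟨fun q => L (some q), fun q hq => hL _ (by simpa using hq), ?_, ?_⟩
  · simpa [b, Prod.fst_sum] using congrArg Prod.fst hsum
  · have hnone := hL none (by simp)
    have := congrArg Prod.snd hsum
    simp only [b, Option.elim_none, Option.elim_some, Prod.snd_add, Prod.smul_snd, Prod.snd_sum,
      smul_eq_mul, mul_one] at this
    linarith

lemma exists_pos_lt_of_polyhedron_eq_empty [CompleteSpace E] (h : polyhedron s a c = ∅)
    {M : ι → ℝ} (hM : ∀ q ∈ s, 0 ≤ M q) :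
    ∃ δ > 0, ∀ x r, (∀ q ∈ s, ⟪a q, x⟫ ≤ c q + M q * r) → δ < r := by
  obtain ⟨l, hl, hla, hlc⟩ := exists_farkas_certificate h
  have hSM : 0 ≤ ∑ q ∈ s, l q * M q :=
    Finset.sum_nonneg fun q hq => mul_nonneg (hl q hq) (hM q hq)
  refine ⟨-(∑ q ∈ s, l q * c q) / (∑ q ∈ s, l q * M q + 1), by apply div_pos <;> linarith,
    fun x r hx => ?_⟩
  have hgap : -(∑ q ∈ s, l q * c q) ≤ (∑ q ∈ s, l q * M q) * r := by
    have hcomb : ∑ q ∈ s, l q * ⟪a q, x⟫ ≤ ∑ q ∈ s, l q * (c q + M q * r) :=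
      Finset.sum_le_sum fun q hq => mul_le_mul_of_nonneg_left (hx q hq) (hl q hq)
    have hzero : ∑ q ∈ s, l q * ⟪a q, x⟫ = 0 := by
      simp_rw [← real_inner_smul_left, ← sum_inner, hla, inner_zero_left]
    simp only [mul_add, Finset.sum_add_distrib, ← mul_assoc, ← Finset.sum_mul] at hcomb
    linarith
  have hr : 0 < r := by
    by_contra! hr
    nlinarith
  rw [div_lt_iff₀ (by linarith)]
  nlinarith

end Polyhedron

section PolyhedralUnion

variable {E F : Type*} [NormedAddCommGroup E] [NormedSpace ℝ E] [NormedAddCommGroup F]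
  [NormedSpace ℝ F] {C : Set E}

lemma IsPolyhedral.isClosed [FiniteDimensional ℝ E] (hC : IsPolyhedral C) : IsClosed C := by
  obtain ⟨s, rfl⟩ := hC
  simp only [ofPred_forall]
  exact isClosed_biInter fun q _ =>
    isClosed_le (LinearMap.continuous_of_finiteDimensional q.1) continuous_const

lemma IsPolyhedral.preimage {C : Set F} (hC : IsPolyhedral C) (f : E →ᵃ[ℝ] F) :
    IsPolyhedral (f ⁻¹' C) := by
  classical
  obtain ⟨s, rfl⟩ := hC
  refine ⟨s.image fun q => (q.1 ∘ₗ f.linear, q.2 - q.1 (f 0)), ?_⟩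
  ext x
  simp only [mem_preimage, mem_ofPred_eq, Finset.forall_mem_image]
  refine forall₂_congr fun q _ => ?_
  rw [f.decomp]
  simp [le_sub_iff_add_le]

lemma IsPolyhedral.iInter {ι : Type*} [Finite ι] {C : ι → Set E}
    (hC : ∀ i, IsPolyhedral (C i)) : IsPolyhedral (⋂ i, C i) := by
  classical
  have := Fintype.ofFinite ι
  choose s hs using hC
  refine ⟨Finset.univ.biUnion s, ?_⟩
  ext x
  simp only [hs, mem_iInter, mem_ofPred_eq, Finset.mem_biUnion, Finset.mem_univ, true_and,
    forall_exists_index]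
  exact forall_comm

def IsPolyhedralUnion (S : Set E) : Prop :=
  ∃ (N : ℕ) (C : Fin N → Set E), (∀ i, IsPolyhedral (C i)) ∧ S = ⋃ i, C i

lemma isPolyhedralUnion_iUnion {ι : Type*} [Finite ι] {C : ι → Set E}
    (hC : ∀ i, IsPolyhedral (C i)) : IsPolyhedralUnion (⋃ i, C i) := by
  obtain ⟨N, ⟨e⟩⟩ := Finite.exists_equiv_fin ι
  exact ⟨N, C ∘ e.symm, fun i => hC _, (e.symm.iSup_comp (g := C)).symm⟩

lemma IsPolyhedral.isPolyhedralUnion (hC : IsPolyhedral C) : IsPolyhedralUnion C := by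
  have := isPolyhedralUnion_iUnion (ι := Unit) fun _ => hC
  rwa [iUnion_const] at this

lemma IsPolyhedralUnion.union {S T : Set E} (hS : IsPolyhedralUnion S)
    (hT : IsPolyhedralUnion T) : IsPolyhedralUnion (S ∪ T) := by
  obtain ⟨N, C, hC, rfl⟩ := hS
  obtain ⟨M, D, hD, rfl⟩ := hT
  have hsum := Set.iUnion_sum (s := Sum.elim C D)
  simp only [Sum.elim_inl, Sum.elim_inr] at hsum
  rw [← hsum]
  exact isPolyhedralUnion_iUnion (Sum.forall.2 ⟨hC, hD⟩)

lemma IsPolyhedralUnion.preimage {S : Set F} (hS : IsPolyhedralUnion S) (f : E →ᵃ[ℝ] F) :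
    IsPolyhedralUnion (f ⁻¹' S) := by
  obtain ⟨N, C, hC, rfl⟩ := hS
  rw [preimage_iUnion]
  exact ⟨N, _, fun i => (hC i).preimage f, rfl⟩

lemma IsPolyhedralUnion.iInter {ι : Type*} [Finite ι] {S : ι → Set E}
    (hS : ∀ i, IsPolyhedralUnion (S i)) : IsPolyhedralUnion (⋂ i, S i) := by
  choose N C hC hS using hS
  have hdistrib : ⋂ i, S i = ⋃ σ : (i : ι) → Fin (N i), ⋂ i, C i (σ i) := by
    ext x
    simp only [hS, mem_iInter, mem_iUnion]
    exact Classical.skolem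
  rw [hdistrib]
  exact isPolyhedralUnion_iUnion fun σ => IsPolyhedral.iInter fun i => hC i (σ i)

lemma IsPolyhedralUnion.isClosed [FiniteDimensional ℝ E] {S : Set E}
    (hS : IsPolyhedralUnion S) : IsClosed S := by
  obtain ⟨N, C, hC, rfl⟩ := hS
  exact isClosed_iUnion_of_finite fun i => (hC i).isClosed

end PolyhedralUnion

section ErrorBound

open Metric

variable {E F : Type*} [NormedAddCommGroup E] [InnerProductSpace ℝ E] [FiniteDimensional ℝ E]
  [NormedAddCommGroup F] [NormedSpace ℝ F] [FiniteDimensional ℝ F]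

lemma LinearMap.exists_abs_sub_inner_le_mul_norm (φ : E × F →ₗ[ℝ] ℝ) :
    ∃ a : E, ∃ M, 0 ≤ M ∧ ∀ x v, |φ (x, v) - ⟪a, x⟫| ≤ M * ‖v‖ := by
  let ψ := (φ ∘ₗ LinearMap.inr ℝ E F).toContinuousLinearMap
  refine ⟨(InnerProductSpace.toDual ℝ E).symm (φ ∘ₗ LinearMap.inl ℝ E F).toContinuousLinearMap,
    ‖ψ‖, norm_nonneg _, fun x v => ?_⟩
  have hsplit : φ (x, v) = φ (x, 0) + ψ v := by
    simp [ψ, ← map_add]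
  rw [InnerProductSpace.toDual_symm_apply, hsplit]
  simpa using ψ.le_opNorm v

lemma IsPolyhedral.exists_infEDist_slice_le {C : Set (E × F)} (hC : IsPolyhedral C) :
    ∃ κ δ, 0 < δ ∧ ∀ x v, (x, v) ∈ C → ‖v‖ ≤ δ →
      infEDist x {y | (y, 0) ∈ C} ≤ ENNReal.ofReal (κ * ‖v‖) := by
  obtain ⟨s, rfl⟩ := hC
  choose a M hM0 hM using fun q : (E × F →ₗ[ℝ] ℝ) × ℝ => q.1.exists_abs_sub_inner_le_mul_norm
  have hslice : {y | (y, (0 : F)) ∈ {z | ∀ q ∈ s, q.1 z ≤ q.2}} = polyhedron s a Prod.snd := by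
    ext y
    refine forall₂_congr fun q _ => ?_
    have := hM q y 0
    rw [norm_zero, mul_zero, abs_nonpos_iff, sub_eq_zero] at this
    rw [this]
  have hrelax : ∀ x v, (x, v) ∈ {z | ∀ q ∈ s, q.1 z ≤ q.2} →
      ∀ q ∈ s, ⟪a q, x⟫ ≤ q.2 + M q * ‖v‖ := fun x v hxv q hq => by
    linarith [(abs_le.1 (hM q x v)).1, hxv q hq]
  rw [hslice]
  rcases (polyhedron s a Prod.snd).eq_empty_or_nonempty with hempty | hne
  · obtain ⟨δ, hδ, hlt⟩ := exists_pos_lt_of_polyhedron_eq_empty hempty fun q _ => hM0 q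
    exact ⟨0, δ, hδ, fun x v hxv hv => absurd hv (not_le.2 (hlt x _ (hrelax x v hxv)))⟩
  · obtain ⟨κ, hκ, hbound⟩ := exists_hoffman_bound hne
    refine ⟨κ * ∑ q ∈ s, M q, 1, one_pos, fun x v hxv _ => ?_⟩
    obtain ⟨p, hp, hxp⟩ := hbound x
    have hviol : ∑ q ∈ s, max (⟪a q, x⟫ - q.2) 0 ≤ ∑ q ∈ s, M q * ‖v‖ :=
      Finset.sum_le_sum fun q hq =>
        max_le (by linarith [hrelax x v hxv q hq]) (mul_nonneg (hM0 q) (norm_nonneg v))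
    calc infEDist x (polyhedron s a Prod.snd) ≤ edist x p := infEDist_le_edist_of_mem hp
      _ = ENNReal.ofReal ‖x - p‖ := by rw [edist_dist, dist_eq_norm]
      _ ≤ ENNReal.ofReal (κ * ∑ q ∈ s, M q * ‖v‖) :=
        ENNReal.ofReal_le_ofReal (hxp.trans (mul_le_mul_of_nonneg_left hviol hκ))
      _ = ENNReal.ofReal (κ * (∑ q ∈ s, M q) * ‖v‖) := by rw [← Finset.sum_mul, mul_assoc]

theorem IsPolyhedralUnion.exists_errorBound {T : E → Set F}
    (hT : IsPolyhedralUnion {w : E × F | w.2 ∈ T w.1}) :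
    ∃ κ : ℝ, 0 ≤ κ ∧ ∃ ε : ℝ, 0 < ε ∧ ∀ x, infEDist 0 (T x) ≤ ENNReal.ofReal ε →
      infEDist x {u | 0 ∈ T u} ≤ ENNReal.ofReal κ * infEDist 0 (T x) := by
  have hclosed : ∀ x, IsClosed (T x) := fun x =>
    hT.isClosed.preimage (Continuous.prodMk_right x)
  obtain ⟨N, C, hC, hgraph⟩ := hT
  choose κ δ hδ hκ using fun i => (hC i).exists_infEDist_slice_le
  obtain ⟨K, hK, hK0⟩ : ∃ K, (∀ i, κ i ≤ K) ∧ 0 ≤ K :=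
    ((eventually_all.2 fun i => eventually_ge_atTop (κ i)).and (eventually_ge_atTop 0)).exists
  obtain ⟨ε, hε, hε0⟩ : ∃ ε, (∀ i, ε ≤ δ i) ∧ ε ∈ Ioi 0 :=
    ((eventually_all.2 fun i => nhdsWithin_le_nhds (eventually_le_nhds (hδ i))).and
      (eventually_mem_nhdsWithin : ∀ᶠ ε in 𝓝[>] (0 : ℝ), ε ∈ Ioi 0)).exists
  refine ⟨K, hK0, ε, mem_Ioi.1 hε0, fun x hx => ?_⟩
  have hne : (T x).Nonempty := by
    by_contra h
    rw [not_nonempty_iff_eq_empty.1 h, infEDist_empty, top_le_iff] at hx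
    exact ENNReal.ofReal_ne_top hx
  obtain ⟨v, hv, hdist⟩ := (hclosed x).exists_infDist_eq_dist hne 0
  have hedist : infEDist 0 (T x) = ENNReal.ofReal ‖v‖ := by
    rw [← ENNReal.ofReal_toReal (infEDist_ne_top hne), ← infDist, hdist, dist_zero_left]
  obtain ⟨i, hi⟩ := mem_iUnion.1 (hgraph ▸ hv : (x, v) ∈ ⋃ i, C i)
  have hvε : ‖v‖ ≤ ε := by
    rwa [hedist, ENNReal.ofReal_le_ofReal_iff (mem_Ioi.1 hε0).le] at hx
  have hslice : {y | (y, (0 : F)) ∈ C i} ⊆ {u | 0 ∈ T u} := fun y hy =>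
    (hgraph ▸ mem_iUnion.2 ⟨i, hy⟩ : (y, (0 : F)) ∈ {w : E × F | w.2 ∈ T w.1})
  calc infEDist x {u | 0 ∈ T u} ≤ infEDist x {y | (y, 0) ∈ C i} := infEDist_anti hslice
    _ ≤ ENNReal.ofReal (κ i * ‖v‖) := hκ i x v hi (hvε.trans (hε i))
    _ ≤ ENNReal.ofReal (K * ‖v‖) :=
      ENNReal.ofReal_le_ofReal (mul_le_mul_of_nonneg_right (hK i) (norm_nonneg v))
    _ = ENNReal.ofReal K * infEDist 0 (T x) := by rw [ENNReal.ofReal_mul hK0, hedist]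

end ErrorBound

section Subdifferential

lemma mem_rsubdiff_of_forall_inner_le {E : Type*} [NormedAddCommGroup E] [InnerProductSpace ℝ E]
    {f : E → ℝ} (hf : ConvexOn ℝ univ f) {x w : E} {K : ℝ}
    (h : ∀ y, ⟪w, y⟫ ≤ f (x + y) - f x + K * ‖y‖ ^ 2) : w ∈ RSubdiff f x := by
  intro u
  set y := u - x
  -- along the chord from `x` to `u` the quadratic error is `O(s²)` while the gain is linear in `s`
  have hchord : ∀ s ∈ Ioo (0 : ℝ) 1, ⟪w, y⟫ - (f u - f x) ≤ K * ‖y‖ ^ 2 * s := by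
    rintro s ⟨hs0, hs1⟩
    have hconv := hf.2 (mem_univ x) (mem_univ u) (sub_nonneg.2 hs1.le) hs0.le (sub_add_cancel 1 s)
    have hpt : (1 - s) • x + s • u = x + s • y := by
      simp only [y, sub_smul, smul_sub, one_smul]
      abel
    have hs := h (s • y)
    rw [real_inner_smul_right, norm_smul, ← hpt, mul_pow, Real.norm_eq_abs, sq_abs] at hs
    simp only [smul_eq_mul] at hconv
    exact le_of_mul_le_mul_left (by nlinarith) hs0
  have hlim : Tendsto (fun s => K * ‖y‖ ^ 2 * s) (𝓝[>] 0) (𝓝 0) := by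
    simpa using ((continuous_const_mul (K * ‖y‖ ^ 2)).tendsto 0).mono_left nhdsWithin_le_nhds
  have := ge_of_tendsto hlim (Filter.mem_of_superset (Ioo_mem_nhdsGT one_pos) hchord)
  linarith

lemma convexOn_univ_mul_abs {lam : ℝ} (hlam : 0 ≤ lam) :
    ConvexOn ℝ univ fun t : ℝ => lam * |t| := by
  have := (convexOn_univ_norm (E := ℝ)).smul hlam
  simp only [Real.norm_eq_abs] at this
  exact this

lemma mem_rsubdiff_abs_iff {lam a w : ℝ} :
    w ∈ RSubdiff (fun t => lam * |t|) a ↔ |w| ≤ lam ∧ w * a = lam * |a| := by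
  simp only [RSubdiff, mem_ofPred_eq, Real.inner_apply]
  constructor
  · intro h
    have hwa : w * a = lam * |a| := by
      have h0 := h 0
      have h2 := h (2 * a)
      rw [abs_zero, mul_zero, abs_mul, abs_two] at *
      linarith
    have hlin : ∀ u, w * u ≤ lam * |u| := fun u => by
      have := h u
      rw [mul_sub] at this
      linarith
    have h1 : w ≤ lam := by simpa using hlin 1
    have hm1 : -w ≤ lam := by simpa using hlin (-1)
    exact ⟨abs_le.2 ⟨by linarith, h1⟩, hwa⟩
  · rintro ⟨hw, hwa⟩ u
    nlinarith [abs_mul_abs_self w, le_abs_self (w * u), abs_mul w u,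
      mul_le_mul_of_nonneg_right hw (abs_nonneg u)]

lemma isPolyhedralUnion_graph_rsubdiff_abs {lam : ℝ} (hlam : 0 ≤ lam) :
    IsPolyhedralUnion {p : ℝ × ℝ | p.2 ∈ RSubdiff (fun t => lam * |t|) p.1} := by
  classical
  let fst := LinearMap.fst ℝ ℝ ℝ
  let snd := LinearMap.snd ℝ ℝ ℝ
  have hpieces : {p : ℝ × ℝ | p.2 ∈ RSubdiff (fun t => lam * |t|) p.1} =
      ({p | ∀ q ∈ ({(fst, 0), (-fst, 0), (snd, lam), (-snd, lam)} : Finset _), q.1 p ≤ q.2} ∪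
        {p | ∀ q ∈ ({(-fst, 0), (snd, lam), (-snd, -lam)} : Finset _), q.1 p ≤ q.2}) ∪
        {p | ∀ q ∈ ({(fst, 0), (snd, -lam), (-snd, lam)} : Finset _), q.1 p ≤ q.2} := by
    ext ⟨t, w⟩
    simp only [mem_rsubdiff_abs_iff, mem_ofPred_eq, mem_union, Finset.mem_insert,
      Finset.mem_singleton, forall_eq_or_imp, forall_eq, fst, snd, LinearMap.fst_apply,
      LinearMap.snd_apply, LinearMap.neg_apply, Left.neg_nonpos_iff, neg_le_neg_iff]
    constructor
    · rintro ⟨hw, hwt⟩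
      rw [abs_le] at hw
      rcases lt_trichotomy t 0 with ht | rfl | ht
      · have : w = -lam := mul_right_cancel₀ ht.ne (by rw [hwt, abs_of_neg ht]; ring)
        exact Or.inr ⟨ht.le, this.le, by linarith⟩
      · exact Or.inl (Or.inl ⟨le_rfl, le_rfl, hw.2, by linarith⟩)
      · have : w = lam := mul_right_cancel₀ ht.ne' (by rw [hwt, abs_of_pos ht])
        exact Or.inl (Or.inr ⟨ht.le, hw.2, this.ge⟩)
    · rintro ((⟨h1, h2, h3, h4⟩ | ⟨h1, h2, h3⟩) | ⟨h1, h2, h3⟩)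
      · exact ⟨abs_le.2 ⟨by linarith, h3⟩, by simp [le_antisymm h1 h2]⟩
      · rw [le_antisymm h2 h3, abs_of_nonneg hlam, abs_of_nonneg h1]
        exact ⟨le_rfl, rfl⟩
      · rw [le_antisymm h2 (by linarith), abs_neg, abs_of_nonneg hlam, abs_of_nonpos h1]
        exact ⟨le_rfl, by ring⟩
  rw [hpieces]
  exact ((IsPolyhedral.isPolyhedralUnion ⟨_, rfl⟩).union
    (IsPolyhedral.isPolyhedralUnion ⟨_, rfl⟩)).union (IsPolyhedral.isPolyhedralUnion ⟨_, rfl⟩)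

end Subdifferential

section Lasso

open Matrix

variable {m n : ℕ} (A : Matrix (Fin m) (Fin n) ℝ) (b : Fin m → ℝ) (lam : ℝ)

def lassoGrad (x : EuclideanSpace ℝ (Fin n)) : Fin n → ℝ :=
  Aᵀ *ᵥ (A *ᵥ x.ofLp - b)

lemma lassoObj_add (x y : EuclideanSpace ℝ (Fin n)) :
    lassoObj m n A b lam (x + y) = lassoObj m n A b lam x + lassoGrad A b x ⬝ᵥ y.ofLp
      + (1 / 2) * (A *ᵥ y.ofLp ⬝ᵥ A *ᵥ y.ofLp) + lam * ∑ j, (|x j + y j| - |x j|) := by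
  have hres : ∀ i, ∑ j, A i j * (x + y) j - b i = (A *ᵥ x.ofLp - b) i + (A *ᵥ y.ofLp) i := by
    intro i
    simp only [PiLp.add_apply, Pi.sub_apply, mulVec, dotProduct, mul_add,
      Finset.sum_add_distrib]
    ring
  have hcross : (A *ᵥ x.ofLp - b) ⬝ᵥ A *ᵥ y.ofLp = lassoGrad A b x ⬝ᵥ y.ofLp := by
    rw [Matrix.dotProduct_mulVec, lassoGrad, Matrix.mulVec_transpose]
  have hsq : ∑ i, ((A *ᵥ x.ofLp - b) i + (A *ᵥ y.ofLp) i) ^ 2 = ∑ i, (A *ᵥ x.ofLp - b) i ^ 2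
      + 2 * ((A *ᵥ x.ofLp - b) ⬝ᵥ A *ᵥ y.ofLp) + A *ᵥ y.ofLp ⬝ᵥ A *ᵥ y.ofLp := by
    simp only [dotProduct, Finset.mul_sum, ← Finset.sum_add_distrib]
    exact Finset.sum_congr rfl fun i _ => by ring
  have habs : ∑ j, |(x + y) j| = ∑ j, |x j| + ∑ j, (|x j + y j| - |x j|) := by
    simp
  unfold lassoObj
  simp only [hres, hsq, habs, hcross]
  simp only [Matrix.mulVec, dotProduct, Pi.sub_apply]
  ring

lemma mem_rsubdiff_lassoObj_iff (hlam : 0 ≤ lam) (x v : EuclideanSpace ℝ (Fin n)) :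
    v ∈ RSubdiff (lassoObj m n A b lam) x ↔
      ∀ j, v j - lassoGrad A b x j ∈ RSubdiff (fun t => lam * |t|) (x j) := by
  constructor
  · intro hv j
    refine mem_rsubdiff_of_forall_inner_le (convexOn_univ_mul_abs hlam) (K := (1 / 2) * ∑ i, A i j ^ 2) fun t => ?_
    have hsum : ∑ k, (|x k + (EuclideanSpace.single j t) k| - |x k|) = |x j + t| - |x j| := by
      rw [Finset.sum_eq_single j (fun k _ hk => by simp [hk]) (by simp)]
      simp
    have hcol : A.col j ⬝ᵥ A.col j = ∑ i, A i j ^ 2 := by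
      simp [dotProduct, sq]
    have := hv (x + EuclideanSpace.single j t)
    rw [add_sub_cancel_left, lassoObj_add, EuclideanSpace.inner_single_right, hsum] at this
    simp only [PiLp.ofLp_single, dotProduct_single, mulVec_single, dotProduct_smul,
      smul_dotProduct, hcol, op_smul_eq_mul, conj_trivial] at this
    rw [Real.inner_apply, Real.norm_eq_abs, sq_abs]
    linear_combination this
  · intro h u
    obtain ⟨y, rfl⟩ : ∃ y, u = x + y := ⟨u - x, by abel⟩
    rw [add_sub_cancel_left, lassoObj_add]
    have hcoord : ∀ j, (v j - lassoGrad A b x j) * y j ≤ lam * (|x j + y j| - |x j|) := fun j => by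
      have := h j (x j + y j)
      rw [add_sub_cancel_left, Real.inner_apply] at this
      linarith
    have hinner : ⟪v, y⟫ = lassoGrad A b x ⬝ᵥ y.ofLp + ∑ j, (v j - lassoGrad A b x j) * y j := by
      simp [PiLp.inner_apply, dotProduct, sub_mul, mul_comm]
    have hquad : 0 ≤ A *ᵥ y.ofLp ⬝ᵥ A *ᵥ y.ofLp := Finset.sum_nonneg fun i _ => mul_self_nonneg _
    have hsum := Finset.sum_le_sum fun j (_ : j ∈ Finset.univ) => hcoord j
    rw [← Finset.mul_sum] at hsum
    linarith

def lassoCoordMap (j : Fin n) :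
    EuclideanSpace ℝ (Fin n) × EuclideanSpace ℝ (Fin n) →ᵃ[ℝ] ℝ × ℝ where
  toFun w := (w.1 j, w.2 j - lassoGrad A b w.1 j)
  linear :=
    { toFun := fun w => (w.1 j, w.2 j - (Aᵀ *ᵥ (A *ᵥ w.1.ofLp)) j)
      map_add' := fun w w' => by
        simp only [Prod.fst_add, Prod.snd_add, WithLp.ofLp_add, mulVec_add, Pi.add_apply,
          Prod.mk_add_mk]
        ring_nf
      map_smul' := fun c w => by
        simp only [Prod.smul_fst, Prod.smul_snd, WithLp.ofLp_smul, mulVec_smul, Pi.smul_apply,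
          smul_eq_mul, RingHom.id_apply, Prod.smul_mk]
        ring_nf }
  map_vadd' w w' := by
    simp only [lassoGrad, vadd_eq_add, Prod.fst_add, Prod.snd_add, WithLp.ofLp_add, mulVec_add,
      mulVec_sub, Pi.add_apply, Pi.sub_apply, LinearMap.coe_mk, AddHom.coe_mk, Prod.mk_add_mk]
    ring_nf

lemma isPolyhedralUnion_graph_rsubdiff_lassoObj (hlam : 0 ≤ lam) :
    IsPolyhedralUnion {w : EuclideanSpace ℝ (Fin n) × EuclideanSpace ℝ (Fin n) |
      w.2 ∈ RSubdiff (lassoObj m n A b lam) w.1} := by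
  have hgraph : {w : EuclideanSpace ℝ (Fin n) × EuclideanSpace ℝ (Fin n) |
      w.2 ∈ RSubdiff (lassoObj m n A b lam) w.1} =
      ⋂ j, lassoCoordMap A b j ⁻¹' {p : ℝ × ℝ | p.2 ∈ RSubdiff (fun t => lam * |t|) p.1} := by
    ext w
    simp only [mem_ofPred_eq, mem_rsubdiff_lassoObj_iff A b lam hlam, mem_iInter, mem_preimage]
    rfl
  rw [hgraph]
  exact IsPolyhedralUnion.iInter fun j => (isPolyhedralUnion_graph_rsubdiff_abs hlam).preimage _

lemma exists_forall_lassoObj_le (hlam : 0 < lam) :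
    ∃ x, ∀ u, lassoObj m n A b lam x ≤ lassoObj m n A b lam u := by
  have hcont : Continuous (lassoObj m n A b lam) := by
    unfold lassoObj
    fun_prop
  have hcoercive : ∀ x : EuclideanSpace ℝ (Fin n), lam * ‖x‖ ≤ lassoObj m n A b lam x := by
    intro x
    have hnorm : ‖x‖ ≤ ∑ j, |x j| := by
      rw [EuclideanSpace.norm_eq, Real.sqrt_le_iff]
      refine ⟨Finset.sum_nonneg fun j _ => abs_nonneg _, ?_⟩
      simpa [Real.norm_eq_abs] using Finset.sum_sq_le_sq_sum_of_nonneg fun j _ => abs_nonneg (x j)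
    have hquad : 0 ≤ (1 / 2 : ℝ) * ∑ i, ((∑ j, A i j * x j) - b i) ^ 2 := by positivity
    unfold lassoObj
    nlinarith [mul_le_mul_of_nonneg_left hnorm hlam.le]
  exact hcont.exists_forall_le <|
    tendsto_atTop_mono hcoercive (tendsto_norm_cocompact_atTop.const_mul_atTop hlam)

end Lasso

theorem lasso_subdifferential_polyhedral_and_error_bound
    (m n : ℕ) (A : Matrix (Fin m) (Fin n) ℝ) (b : Fin m → ℝ) (lam : ℝ) (hlam : 0 < lam) :
    -- the graph of T_f = ∂f is the union of finitely many polyhedral convex sets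
    (∃ (N : ℕ) (C : Fin N → Set (EuclideanSpace ℝ (Fin n) × EuclideanSpace ℝ (Fin n))),
      (∀ i, IsPolyhedral (C i)) ∧
      {w : EuclideanSpace ℝ (Fin n) × EuclideanSpace ℝ (Fin n) |
        w.2 ∈ RSubdiff (lassoObj m n A b lam) w.1} = ⋃ i, C i) ∧
    -- the set of minimizers T_f⁻¹(0) is nonempty
    {x : EuclideanSpace ℝ (Fin n) | (0 : EuclideanSpace ℝ (Fin n)) ∈
      RSubdiff (lassoObj m n A b lam) x}.Nonempty ∧
    -- the error bound condition for the origin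
    ∃ κ : ℝ, 0 ≤ κ ∧ ∃ ε : ℝ, 0 < ε ∧ ∀ x : EuclideanSpace ℝ (Fin n),
      EMetric.infEdist 0 (RSubdiff (lassoObj m n A b lam) x) ≤ ENNReal.ofReal ε →
      EMetric.infEdist x {u : EuclideanSpace ℝ (Fin n) | (0 : EuclideanSpace ℝ (Fin n)) ∈
          RSubdiff (lassoObj m n A b lam) u} ≤
        ENNReal.ofReal κ * EMetric.infEdist 0 (RSubdiff (lassoObj m n A b lam) x) := by
  have hgraph := isPolyhedralUnion_graph_rsubdiff_lassoObj A b lam hlam.le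
  obtain ⟨x, hx⟩ := exists_forall_lassoObj_le A b lam hlam
  exact ⟨hgraph, ⟨x, fun u => by simpa using hx u⟩, hgraph.exists_errorBound⟩
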